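/- arXiv:1207.3459 — 2 statements merged into one kernel-verified Lean document; each statement's English description precedes it below -/
import Mathlib

section
/- Let H be a finite group, let j ≥ 1 be a natural number, let ρ : H → Perm(Fin j) be a group homomorphism, and let U be a countable H-set such that for every subgroup K of H there are infinitely many orbits of U that are H-equivariantly bijective to H ⧸ K. Then there exists an injective function φ : Fin j × U → U such that φ(ρ(h)(i), h • u) = h • φ(i, u) for all h ∈ H, i ∈ Fin j, and u ∈ U. -/
/-!
Every orbit of `Fin j × U` is isomorphic to `H ⧸ K`, with `K` the stabilizer of a chosen point,
and there are only countably many such orbits. Since `U` has infinitely many orbits of each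
type, Hall's marriage theorem (for finite sets of sizes `1, 2, 3, …` inside these infinite
families) matches the orbits of `Fin j × U` with pairwise distinct orbits of `U` of the same
type. Gluing the orbit isomorphisms gives an equivariant injection.
-/

/-- The orbit of `u` is `H`-equivariantly bijective to the coset space `H ⧸ K`. -/
def OrbitIsoTo (H : Type*) [Group H] (K : Subgroup H) {U : Type*} [MulAction H U]
    (u : U) : Prop :=
  ∃ f : MulAction.orbit H u ≃ (H ⧸ K),
    ∀ (h : H) (v : MulAction.orbit H u), f (h • v) = h • f v

open Function Finset MulAction

theorem exists_injective_forall_mem_of_infinite {ι α : Type*} [Countable ι] (S : ι → Set α)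
    (hS : ∀ i, (S i).Infinite) : ∃ f : ι → α, Injective f ∧ ∀ i, f i ∈ S i := by
  classical
  obtain ⟨e, he⟩ := Countable.exists_injective_nat ι
  choose t htS htcard using fun i => (hS i).exists_subset_card_eq (e i + 1)
  have hall (s : Finset ι) : #s ≤ #(s.biUnion t) := by
    rcases s.eq_empty_or_nonempty with rfl | hs
    · exact (card_empty).le
    obtain ⟨i, hi, hmax⟩ := s.exists_max_image e hs
    calc #s = #(s.image e) := (card_image_of_injective s he).symm
      _ ≤ #(range (e i + 1)) := card_le_card fun n hn => by
          obtain ⟨k, hk, rfl⟩ := mem_image.1 hn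
          exact mem_range.2 (Nat.lt_succ_of_le (hmax k hk))
      _ = #(t i) := by rw [card_range, htcard]
      _ ≤ #(s.biUnion t) := card_le_card (subset_biUnion_of_mem t hi)
  obtain ⟨f, hf, hft⟩ := (all_card_le_biUnion_card_iff_exists_injective t).1 hall
  exact ⟨f, hf, fun i => htS i (hft i)⟩

section

variable {H X Y : Type*} [Group H] [MulAction H X] [MulAction H Y]

theorem MulAction.orbitEquivQuotientStabilizer_smul (x : X) (h : H) (v : orbit H x) :
    orbitEquivQuotientStabilizer H x (h • v) = h • orbitEquivQuotientStabilizer H x v := by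
  obtain ⟨w, rfl⟩ := (orbitEquivQuotientStabilizer H x).symm.surjective v
  induction w using QuotientGroup.induction_on with
  | H a =>
    rw [Equiv.apply_symm_apply, ← Equiv.eq_symm_apply]
    ext
    simp [orbitEquivQuotientStabilizer_symm_apply, mul_smul]

theorem OrbitIsoTo.exists_bijective_mulActionHom {x : X} {y : Y}
    (hy : OrbitIsoTo H (stabilizer H x) y) : ∃ g : orbit H x →[H] orbit H y, Bijective g := by
  obtain ⟨f, hf⟩ := hy
  let e : orbit H x ≃ orbit H y := (orbitEquivQuotientStabilizer H x).trans f.symm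
  refine ⟨⟨e, fun h v => f.injective ?_⟩, e.bijective⟩
  simp [e, hf, orbitEquivQuotientStabilizer_smul]

theorem exists_injective_mulActionHom_of_orbits (u : orbitRel.Quotient H X → Y)
    (hu : Injective fun ω => (Quotient.mk _ (u ω) : orbitRel.Quotient H Y))
    (g : ∀ ω : orbitRel.Quotient H X, orbit H ω.out →[H] orbit H (u ω))
    (hg : ∀ ω, Injective (g ω)) : ∃ φ : X →[H] Y, Injective φ := by
  have mem_out (x : X) : x ∈ orbit H (Quotient.mk (orbitRel H X) x).out :=
    mem_orbit_symm.1 (Quotient.mk_out (s := orbitRel H X) x)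
  let φ (x : X) : Y := g _ ⟨x, mem_out x⟩
  have φ_eq {ω : orbitRel.Quotient H X} {x : X} (hx : x ∈ orbit H ω.out) :
      φ x = g ω ⟨x, hx⟩ := by
    obtain rfl : Quotient.mk _ x = ω := Quotient.mk_eq_iff_out.2 hx
    rfl
  have mk_φ (x : X) :
      (Quotient.mk _ (φ x) : orbitRel.Quotient H Y) = Quotient.mk _ (u (Quotient.mk _ x)) :=
    Quotient.sound (g _ _).2
  refine ⟨⟨φ, fun h x => ?_⟩, fun x x' (hxx' : φ x = φ x') => ?_⟩
  · rw [φ_eq (mem_orbit_of_mem_orbit h (mem_out x))]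
    exact congrArg Subtype.val ((g _).map_smul h ⟨x, mem_out x⟩)
  · have hω : Quotient.mk _ x = Quotient.mk (orbitRel H X) x' :=
      hu (by simpa only [mk_φ] using congrArg (Quotient.mk (orbitRel H Y)) hxx')
    have hx := hω ▸ mem_out x
    rw [φ_eq hx, φ_eq (mem_out x')] at hxx'
    exact congrArg Subtype.val (hg _ (Subtype.ext hxx'))

end

theorem exists_equivariant_injection_of_copies_general (H : Type*) [Group H]
    (j : ℕ) (ρ : H →* Equiv.Perm (Fin j))
    (U : Type*) [Countable U] [MulAction H U]
    (hU : ∀ K : Subgroup H,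
      {ω : Quotient (MulAction.orbitRel H U) |
        ∃ u : U, Quotient.mk (MulAction.orbitRel H U) u = ω ∧ OrbitIsoTo H K u}.Infinite) :
    ∃ φ : Fin j × U → U, Function.Injective φ ∧
      ∀ (h : H) (i : Fin j) (u : U), φ (ρ h i, h • u) = h • φ (i, u) := by
  let : MulAction H (Fin j) := MulAction.compHom _ ρ
  obtain ⟨F, hF, hFmem⟩ := exists_injective_forall_mem_of_infinite _
    fun ω : orbitRel.Quotient H (Fin j × U) => hU (stabilizer H ω.out)
  choose u hu hiso using hFmem
  choose g hg using fun ω => (hiso ω).exists_bijective_mulActionHom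
  obtain ⟨φ, hφ⟩ := exists_injective_mulActionHom_of_orbits u (by simpa only [hu] using hF) g
    fun ω => (hg ω).injective
  exact ⟨φ, hφ, fun h i x => φ.map_smul h (i, x)⟩

/-- For a finite group `H`, `j ≥ 1`, a homomorphism `ρ : H →* Perm (Fin j)`, and a
countable `H`-set `U` containing infinitely many orbits of every type, there is an
injection `Fin j × U → U` which is equivariant for the twisted action
`h • (i, u) = (ρ h i, h • u)` on the source. -/
theorem exists_equivariant_injection_of_copies (H : Type*) [Group H] [Finite H]
    (j : ℕ) (hj : 1 ≤ j) (ρ : H →* Equiv.Perm (Fin j))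
    (U : Type*) [Countable U] [MulAction H U]
    (hU : ∀ K : Subgroup H,
      {ω : Quotient (MulAction.orbitRel H U) |
        ∃ u : U, Quotient.mk (MulAction.orbitRel H U) u = ω ∧ OrbitIsoTo H K u}.Infinite) :
    ∃ φ : Fin j × U → U, Function.Injective φ ∧
      ∀ (h : H) (i : Fin j) (u : U), φ (ρ h i, h • u) = h • φ (i, u) :=
  exists_equivariant_injection_of_copies_general H j ρ U hU
end

section
/- Let H be a finite group, let j ≥ 1 be a natural number, let ρ : H → Perm(Fin j) be a group homomorphism, and let U be a countable H-set such that for every subgroup K of H there are infinitely many orbits of U that are H-equivariantly bijective to H ⧸ K. Give the type of functions Fin j → U the H-action (h • f)(i) = h • f(ρ(h)⁻¹(i)) (this is a well-defined H-action). Then there exists an H-equivariant bijection (Fin j → U) ≃ U. -/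
/-- The twisted action of `H` on `Fin j → U`: `(h • f) i = h • f (ρ(h)⁻¹ i)`. -/
def twistedAct {H : Type*} [Group H] {j : ℕ} {U : Type*} [MulAction H U]
    (ρ : H →* Equiv.Perm (Fin j)) (h : H) (f : Fin j → U) : Fin j → U :=
  fun i => h • f ((ρ h)⁻¹ i)

namespace MulAction

variable {H X Y : Type*} [Group H] [MulAction H X] [MulAction H Y]

def orbitType (ω : orbitRel.Quotient H X) : Set (Subgroup H) :=
  stabilizer H '' ω.orbit

theorem orbitType_mk (x : X) :
    orbitType (⟦x⟧ : orbitRel.Quotient H X) =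
      Set.range fun g : H => (stabilizer H x).map (MulAut.conj g).toMonoidHom := by
  ext K
  simp only [orbitType, Set.mem_image, Set.mem_range]
  constructor
  · rintro ⟨_, ⟨g, rfl⟩, rfl⟩
    exact ⟨g, (stabilizer_smul_eq_stabilizer_map_conj g x).symm⟩
  · rintro ⟨g, rfl⟩
    exact ⟨g • x, mem_orbit x g, stabilizer_smul_eq_stabilizer_map_conj g x⟩

theorem orbitType_nonempty (ω : orbitRel.Quotient H X) : (orbitType ω).Nonempty := by
  induction ω using Quotient.inductionOn with
  | h x => exact ⟨_, x, orbitRel.Quotient.mem_orbit.2 rfl, rfl⟩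

theorem orbitType_eq_of_stabilizer_mem {x : X} {ω : orbitRel.Quotient H Y}
    (h : stabilizer H x ∈ orbitType ω) :
    orbitType ω = orbitType (⟦x⟧ : orbitRel.Quotient H X) := by
  obtain ⟨y, hy, hxy⟩ := h
  rw [← orbitRel.Quotient.mem_orbit.1 hy, orbitType_mk, orbitType_mk, hxy]

theorem stabilizer_apply_of_injective (f : X →[H] Y) (hf : Function.Injective f) (x : X) :
    stabilizer H (f x) = stabilizer H x := by
  ext h
  rw [mem_stabilizer_iff, mem_stabilizer_iff, ← map_smul, hf.eq_iff]

theorem selfEquivSigmaOrbitsQuotientStabilizer'_smul {r : orbitRel.Quotient H X → X}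
    (hr : Function.LeftInverse Quotient.mk'' r) (h : H) (x : X) :
    selfEquivSigmaOrbitsQuotientStabilizer' H X hr (h • x) =
      h • selfEquivSigmaOrbitsQuotientStabilizer' H X hr x := by
  set S := selfEquivSigmaOrbitsQuotientStabilizer' H X hr
  obtain ⟨⟨ω, q⟩, rfl⟩ := S.symm.surjective x
  rw [S.apply_symm_apply, ← S.eq_symm_apply, Sigma.smul_mk]
  exact (ofQuotientStabilizer_smul H (r ω) h q).symm

theorem exists_leftInverse_stabilizer_eq (c : Set (Subgroup H) → Subgroup H)
    (hc : ∀ s, s.Nonempty → c s ∈ s) :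
    ∃ r : orbitRel.Quotient H X → X, Function.LeftInverse Quotient.mk'' r ∧
      ∀ ω, stabilizer H (r ω) = c (orbitType ω) := by
  choose r hr hstab using fun ω : orbitRel.Quotient H X => hc _ (orbitType_nonempty ω)
  exact ⟨r, fun ω => orbitRel.Quotient.mem_orbit.1 (hr ω), hstab⟩

theorem exists_smul_equiv_of_orbitType_equiv
    (φ : orbitRel.Quotient H X ≃ orbitRel.Quotient H Y)
    (hφ : ∀ ω, orbitType (φ ω) = orbitType ω) :
    ∃ e : X ≃ Y, ∀ (h : H) (x : X), e (h • x) = h • e x := by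
  let c : Set (Subgroup H) → Subgroup H := fun s => Classical.epsilon (· ∈ s)
  have hc : ∀ s : Set (Subgroup H), s.Nonempty → c s ∈ s := fun _ => Classical.epsilon_spec
  obtain ⟨rX, hrX, hsX⟩ := exists_leftInverse_stabilizer_eq (X := X) c hc
  obtain ⟨rY, hrY, hsY⟩ := exists_leftInverse_stabilizer_eq (X := Y) c hc
  have hstab : ∀ ω, stabilizer H (rX ω) = stabilizer H (rY (φ ω)) := by
    intro ω
    rw [hsX, hsY, hφ]
  let SX := selfEquivSigmaOrbitsQuotientStabilizer' H X hrX
  let SY := selfEquivSigmaOrbitsQuotientStabilizer' H Y hrY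
  refine ⟨SX.trans ((Equiv.sigmaCongr φ fun ω => Subgroup.quotientEquivOfEq (hstab ω)).trans
    SY.symm), fun h x => ?_⟩
  simp only [Equiv.trans_apply]
  rw [selfEquivSigmaOrbitsQuotientStabilizer'_smul]
  obtain ⟨ω, q⟩ := SX x
  induction q using QuotientGroup.induction_on with
  | H g =>
    show (h * g) • rY (φ ω) = h • g • rY (φ ω)
    exact mul_smul h g (rY (φ ω))

variable (H X) in
def HasInfinitelyManyOrbitsOfEachType : Prop :=
  ∀ K : Subgroup H, {ω : orbitRel.Quotient H X | K ∈ orbitType ω}.Infinite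

theorem HasInfinitelyManyOrbitsOfEachType.infinite_orbitType_eq
    (hY : HasInfinitelyManyOrbitsOfEachType H Y) (ω : orbitRel.Quotient H X) :
    {ω' : orbitRel.Quotient H Y | orbitType ω' = orbitType ω}.Infinite := by
  induction ω using Quotient.inductionOn with
  | h x => exact (hY (stabilizer H x)).mono fun _ => orbitType_eq_of_stabilizer_mem

theorem HasInfinitelyManyOrbitsOfEachType.nonempty_orbitType_fiber_equiv
    [Countable X] [Countable Y] (hX : HasInfinitelyManyOrbitsOfEachType H X)
    (hY : HasInfinitelyManyOrbitsOfEachType H Y) (s : Set (Subgroup H)) :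
    Nonempty ({ω : orbitRel.Quotient H X // orbitType ω = s} ≃
      {ω : orbitRel.Quotient H Y // orbitType ω = s}) := by
  by_cases hXs : ∃ ω : orbitRel.Quotient H X, orbitType ω = s
  · obtain ⟨ω, rfl⟩ := hXs
    have : Infinite {ω' : orbitRel.Quotient H X // orbitType ω' = orbitType ω} :=
      (hX.infinite_orbitType_eq ω).to_subtype
    have : Infinite {ω' : orbitRel.Quotient H Y // orbitType ω' = orbitType ω} :=
      (hY.infinite_orbitType_eq ω).to_subtype
    exact nonempty_equiv_of_countable
  by_cases hYs : ∃ ω : orbitRel.Quotient H Y, orbitType ω = s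
  · obtain ⟨ω, rfl⟩ := hYs
    exact (hXs (hX.infinite_orbitType_eq ω).nonempty).elim
  · have : IsEmpty {ω : orbitRel.Quotient H X // orbitType ω = s} := ⟨fun ω => hXs ⟨ω.1, ω.2⟩⟩
    have : IsEmpty {ω : orbitRel.Quotient H Y // orbitType ω = s} := ⟨fun ω => hYs ⟨ω.1, ω.2⟩⟩
    exact ⟨Equiv.equivOfIsEmpty _ _⟩

theorem HasInfinitelyManyOrbitsOfEachType.exists_smul_equiv [Countable X] [Countable Y]
    (hX : HasInfinitelyManyOrbitsOfEachType H X) (hY : HasInfinitelyManyOrbitsOfEachType H Y) :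
    ∃ e : X ≃ Y, ∀ (h : H) (x : X), e (h • x) = h • e x :=
  exists_smul_equiv_of_orbitType_equiv
    (Equiv.ofFiberEquiv fun s => (hX.nonempty_orbitType_fiber_equiv hY s).some)
    (Equiv.ofFiberEquiv_map _)

theorem HasInfinitelyManyOrbitsOfEachType.of_injective
    (hX : HasInfinitelyManyOrbitsOfEachType H X) (f : X →[H] Y) (hf : Function.Injective f) :
    HasInfinitelyManyOrbitsOfEachType H Y := by
  let F : orbitRel.Quotient H X → orbitRel.Quotient H Y :=
    Quotient.map' f fun x x' ⟨g, hg⟩ => ⟨g, by simp only at hg ⊢; rw [← map_smul, hg]⟩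
  have hF : Function.Injective F := by
    refine fun ω ω' => Quotient.inductionOn₂' ω ω' fun x x' hxx' => Quotient.sound' ?_
    obtain ⟨g, hg⟩ := Quotient.exact' hxx'
    exact ⟨g, hf (by simp only at hg ⊢; rw [map_smul, hg])⟩
  intro K
  refine ((hX K).image hF.injOn).mono ?_
  rintro _ ⟨ω, ⟨x, hx, rfl⟩, rfl⟩
  refine ⟨f x, ?_, stabilizer_apply_of_injective f hf x⟩
  rw [orbitRel.Quotient.mem_orbit, ← orbitRel.Quotient.mem_orbit.1 hx]
  rfl

end MulAction

open MulAction

theorem OrbitIsoTo.mem_orbitType {H U : Type*} [Group H] [MulAction H U] {K : Subgroup H}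
    {u : U}
    (hu : OrbitIsoTo H K u) : K ∈ orbitType (⟦u⟧ : orbitRel.Quotient H U) := by
  obtain ⟨f, hf⟩ := hu
  let g : H ⧸ K →[H] U :=
    { toFun := fun q => f.symm q
      map_smul' := fun h q => by
        simp only [id, ← orbit.coe_smul, Subtype.coe_inj]
        rw [f.symm_apply_eq, hf, f.apply_symm_apply] }
  refine ⟨g (1 : H), (f.symm _).2, ?_⟩
  rw [stabilizer_apply_of_injective g (Subtype.val_injective.comp f.symm.injective),
    stabilizer_quotient]

def TwistedPower {H : Type*} [Group H] {j : ℕ} (_ : H →* Equiv.Perm (Fin j)) (U : Type*) :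
    Type _ :=
  Fin j → U

namespace TwistedPower

variable {H : Type*} [Group H] {j : ℕ} (ρ : H →* Equiv.Perm (Fin j)) (U : Type*)

instance [Countable U] : Countable (TwistedPower ρ U) :=
  inferInstanceAs (Countable (Fin j → U))

instance [MulAction H U] : MulAction H (TwistedPower ρ U) where
  smul := twistedAct ρ
  one_smul f := funext fun i => by
    show (1 : H) • f ((ρ 1)⁻¹ i) = f i
    simp
  mul_smul h h' f := funext fun i => by
    show (h * h') • f ((ρ (h * h'))⁻¹ i) = h • h' • f ((ρ h')⁻¹ ((ρ h)⁻¹ i))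
    simp [mul_smul]

def diagonal [MulAction H U] : U →[H] TwistedPower ρ U where
  toFun u _ := u
  map_smul' _ _ := rfl

theorem diagonal_injective [MulAction H U] (hj : 1 ≤ j) : Function.Injective (diagonal ρ U) :=
  fun _ _ h => congrFun h ⟨0, hj⟩

end TwistedPower

theorem exists_equivariant_power_bijection_general (H : Type*) [Group H]
    (j : ℕ) (hj : 1 ≤ j) (ρ : H →* Equiv.Perm (Fin j))
    (U : Type*) [Countable U] [MulAction H U]
    (hU : ∀ K : Subgroup H,
      {ω : Quotient (MulAction.orbitRel H U) |
        ∃ u : U, Quotient.mk (MulAction.orbitRel H U) u = ω ∧ OrbitIsoTo H K u}.Infinite) :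
    (∀ f : Fin j → U, twistedAct ρ (1 : H) f = f) ∧
    (∀ (h h' : H) (f : Fin j → U),
      twistedAct ρ (h * h') f = twistedAct ρ h (twistedAct ρ h' f)) ∧
    ∃ e : (Fin j → U) ≃ U, ∀ (h : H) (f : Fin j → U), e (twistedAct ρ h f) = h • e f := by
  have hU' : HasInfinitelyManyOrbitsOfEachType H U := fun K =>
    (hU K).mono <| by
      rintro _ ⟨u, rfl, hu⟩
      exact hu.mem_orbitType
  refine ⟨one_smul H (α := TwistedPower ρ U), mul_smul (β := TwistedPower ρ U), ?_⟩
  have hPower : HasInfinitelyManyOrbitsOfEachType H (TwistedPower ρ U) :=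
    hU'.of_injective (TwistedPower.diagonal ρ U) (TwistedPower.diagonal_injective ρ U hj)
  exact hPower.exists_smul_equiv hU'

/-- For a finite group `H`, `j ≥ 1`, a homomorphism `ρ : H →* Perm (Fin j)`, and a
countable `H`-set `U` containing infinitely many orbits of every type: the twisted
formula `(h • f) i = h • f (ρ(h)⁻¹ i)` is a well-defined `H`-action on `Fin j → U`,
and there is an `H`-equivariant bijection `(Fin j → U) ≃ U`. -/
theorem exists_equivariant_power_bijection (H : Type*) [Group H] [Finite H]
    (j : ℕ) (hj : 1 ≤ j) (ρ : H →* Equiv.Perm (Fin j))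
    (U : Type*) [Countable U] [MulAction H U]
    (hU : ∀ K : Subgroup H,
      {ω : Quotient (MulAction.orbitRel H U) |
        ∃ u : U, Quotient.mk (MulAction.orbitRel H U) u = ω ∧ OrbitIsoTo H K u}.Infinite) :
    (∀ f : Fin j → U, twistedAct ρ (1 : H) f = f) ∧
    (∀ (h h' : H) (f : Fin j → U),
      twistedAct ρ (h * h') f = twistedAct ρ h (twistedAct ρ h' f)) ∧
    ∃ e : (Fin j → U) ≃ U, ∀ (h : H) (f : Fin j → U), e (twistedAct ρ h f) = h • e f :=
  exists_equivariant_power_bijection_general H j hj ρ U hU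
end
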